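/- Let P be a b₀×b₁ probability matrix with positive entries and suppose λ₀, λ₁ ≤ 1 ≤ λ₀+λ₁ are P-sub-conjugate. Consider a bucketing code given by T pairs (B_{0,t}, B_{1,t}) of subsets of the row and column alphabets, with success probability S = p_{∪_t B_{0,t}×B_{1,t}} and work W = ∑_t max(n₀·p_{B_{0,t}*}, n₁·p_{*B_{1,t}}, n₀·p_{B_{0,t}*}·n₁·p_{*B_{1,t}}) for given positive reals n₀, n₁. Then W ≥ S·n₀^{λ₀}·n₁^{λ₁}. -/

import Mathlib

open Finset

/-- `λ₀, λ₁` are `P`-sub-conjugate. -/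
def SubConjugate {α β : Type*} [Fintype α] [Fintype β]
    (P : α → β → ℝ) (lam0 lam1 : ℝ) : Prop :=
  ∀ Q : α → β → ℝ, (∀ j k, 0 ≤ Q j k) → (∑ j, ∑ k, Q j k = 1) →
    lam0 * (∑ j, (∑ k, Q j k) * Real.log ((∑ k, Q j k) / (∑ k, P j k))) +
      lam1 * (∑ k, (∑ j, Q j k) * Real.log ((∑ j, Q j k) / (∑ j, P j k))) ≤
    ∑ j, ∑ k, Q j k * Real.log (Q j k / P j k)

/-! Conditioning `P` on a rectangle `A × B` gives a matrix `Q` with `K(Q‖P) = -log p_{A×B}`,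
while by Gibbs' inequality its marginals satisfy `K(Q_{·*}‖P_{·*}) ≥ -log p_{A*}` and
`K(Q_{*·}‖P_{*·}) ≥ -log p_{*B}`. Sub-conjugacy therefore yields
`p_{A×B} ≤ p_{A*}^{λ₀} p_{*B}^{λ₁}`. Since `x^{λ₀} y^{λ₁} ≤ max(x, y, xy)` when
`λ₀, λ₁ ≤ 1 ≤ λ₀ + λ₁`, each bucket's mass times `n₀^{λ₀} n₁^{λ₁}` is at most its work, and
the union bound sums this over the buckets. -/

open Real

lemma sub_le_mul_log_div {q r : ℝ} (hq : 0 ≤ q) (hr : 0 < r) : q - r ≤ q * log (q / r) := by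
  rcases hq.eq_or_lt with rfl | hq
  · simpa using hr.le
  · have := mul_le_mul_of_nonneg_left (one_sub_inv_le_log_of_pos (div_pos hq hr)) hq.le
    rwa [inv_div, mul_one_sub, mul_div_cancel₀ _ hq.ne'] at this

lemma neg_log_sum_le_sum_mul_log_div {ι : Type*} [Fintype ι] {s : Finset ι} {q p : ι → ℝ}
    (hq : ∀ i, 0 ≤ q i) (hq1 : ∑ i, q i = 1) (hqs : ∀ i ∉ s, q i = 0) (hp : ∀ i, 0 < p i) :
    -log (∑ i ∈ s, p i) ≤ ∑ i, q i * log (q i / p i) := by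
  have hsum_univ : ∀ {f : ι → ℝ}, (∀ i ∉ s, q i = 0 → f i = 0) → ∑ i ∈ s, f i = ∑ i, f i :=
    fun hf => sum_subset (subset_univ s) fun i _ hi => hf i hi (hqs i hi)
  rw [← hsum_univ fun i _ h => h] at hq1
  rw [← hsum_univ fun i _ h => by simp [h]]
  set a := ∑ i ∈ s, p i
  have ha : 0 < a := sum_pos (fun i _ => hp i) (nonempty_of_sum_ne_zero (f := q) (by simp [hq1]))
  -- compare `q` with the normalised weights `p / a`
  have key : ∀ i ∈ s, q i - p i / a - q i * log a ≤ q i * log (q i / p i) := by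
    intro i _
    have hlog : q i * log (q i / (p i / a)) = q i * log (q i / p i) + q i * log a := by
      rcases (hq i).eq_or_lt with h | h
      · simp [← h]
      · rw [div_div_eq_mul_div, mul_div_right_comm, log_mul (div_pos h (hp i)).ne' ha.ne', mul_add]
    linarith [sub_le_mul_log_div (hq i) (div_pos (hp i) ha)]
  calc -log a = ∑ i ∈ s, (q i - p i / a - q i * log a) := by
        rw [sum_sub_distrib, sum_sub_distrib, ← sum_div, ← sum_mul, hq1, div_self ha.ne']; ring
    _ ≤ _ := sum_le_sum key

lemma rpow_mul_rpow_le_max {x y lam0 lam1 : ℝ} (hx : 0 ≤ x) (hy : 0 ≤ y)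
    (hl0 : lam0 ≤ 1) (hl1 : lam1 ≤ 1) (hls : 1 ≤ lam0 + lam1) :
    x ^ lam0 * y ^ lam1 ≤ max (max x y) (x * y) := by
  have h0 : 0 ≤ lam0 := by linarith
  have h1 : 0 ≤ lam1 := by linarith
  rcases le_or_gt x 1 with hx1 | hx1 <;> rcases le_or_gt y 1 with hy1 | hy1
  · have hm : 0 ≤ max x y := le_max_of_le_left hx
    calc x ^ lam0 * y ^ lam1 ≤ max x y ^ lam0 * max x y ^ lam1 := by
          gcongr
          exacts [le_max_left _ _, le_max_right _ _]
      _ = max x y ^ (lam0 + lam1) := (rpow_add' hm (by linarith)).symm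
      _ ≤ max x y := rpow_le_self_of_le_one hm (max_le hx1 hy1) hls
      _ ≤ _ := le_max_left _ _
  · calc x ^ lam0 * y ^ lam1 ≤ 1 * y := by
          gcongr
          exacts [rpow_le_one hx hx1 h0, rpow_le_self_of_one_le hy1.le hl1]
      _ ≤ _ := by rw [one_mul]; exact le_max_of_le_left (le_max_right _ _)
  · calc x ^ lam0 * y ^ lam1 ≤ x * 1 := by
          gcongr
          exacts [rpow_le_self_of_one_le hx1.le hl0, rpow_le_one hy hy1 h1]
      _ ≤ _ := by rw [mul_one]; exact le_max_of_le_left (le_max_left _ _)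
  · calc x ^ lam0 * y ^ lam1 ≤ x * y := by
          gcongr
          exacts [rpow_le_self_of_one_le hx1.le hl0, rpow_le_self_of_one_le hy1.le hl1]
      _ ≤ _ := le_max_right _ _

lemma Finset.sum_biUnion_le {ι α M : Type*} [DecidableEq α] [AddCommMonoid M]
    [PartialOrder M] [IsOrderedAddMonoid M] {f : α → M} (hf : ∀ x, 0 ≤ f x) (s : Finset ι)
    (t : ι → Finset α) : ∑ x ∈ s.biUnion t, f x ≤ ∑ i ∈ s, ∑ x ∈ t i, f x := by
  rw [← sup_eq_biUnion]
  refine apply_sup_le_sum (f := fun u => ∑ x ∈ u, f x) sum_empty (fun {u v} => ?_) s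
  rw [← sum_union_inter (s₁ := u)]
  exact le_add_of_nonneg_right (sum_nonneg fun x _ => hf x)

section
variable {α β : Type*} [Fintype α] [Fintype β] {P : α → β → ℝ}

theorem SubConjugate.sum_rect_le_rpow {lam0 lam1 : ℝ} (hsub : SubConjugate P lam0 lam1)
    (hP : ∀ j k, 0 < P j k) (h0 : 0 ≤ lam0) (h1 : 0 ≤ lam1) (A : Finset α) (B : Finset β) :
    ∑ j ∈ A, ∑ k ∈ B, P j k ≤ (∑ j ∈ A, ∑ k, P j k) ^ lam0 * (∑ k ∈ B, ∑ j, P j k) ^ lam1 := by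
  classical
  set s := ∑ j ∈ A, ∑ k ∈ B, P j k
  set a := ∑ j ∈ A, ∑ k, P j k
  set b := ∑ k ∈ B, ∑ j, P j k
  have ha₀ : 0 ≤ a := sum_nonneg fun j _ => sum_nonneg fun k _ => (hP j k).le
  have hb₀ : 0 ≤ b := sum_nonneg fun k _ => sum_nonneg fun j _ => (hP j k).le
  rcases (show 0 ≤ s from sum_nonneg fun j _ => sum_nonneg fun k _ => (hP j k).le).eq_or_lt
    with hs | hs
  · rw [← hs]
    exact mul_nonneg (rpow_nonneg ha₀ _) (rpow_nonneg hb₀ _)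
  obtain ⟨j₀, hj₀, hrow₀⟩ := exists_ne_zero_of_sum_ne_zero hs.ne'
  have hA : A.Nonempty := ⟨j₀, hj₀⟩
  obtain ⟨k₀, hk₀, -⟩ := exists_ne_zero_of_sum_ne_zero hrow₀
  have hrowP : ∀ j, 0 < ∑ k, P j k := fun j => sum_pos (fun k _ => hP j k) ⟨k₀, mem_univ _⟩
  have hcolP : ∀ k, 0 < ∑ j, P j k := fun k => sum_pos (fun j _ => hP j k) ⟨j₀, mem_univ _⟩
  have ha : 0 < a := sum_pos (fun j _ => hrowP j) hA
  have hb : 0 < b := sum_pos (fun k _ => hcolP k) ⟨k₀, hk₀⟩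
  let Q : α → β → ℝ := fun j k => if j ∈ A ∧ k ∈ B then P j k / s else 0
  have hQ0 : ∀ j k, 0 ≤ Q j k := fun j k => by
    unfold Q; split_ifs; exacts [div_nonneg (hP j k).le hs.le, le_rfl]
  have hQ1 : ∑ j, ∑ k, Q j k = 1 := by
    simp only [Q, ite_and, sum_ite_irrel, sum_ite_mem, univ_inter, ← sum_div, sum_const_zero]
    exact div_self hs.ne'
  have hjoint : ∑ j, ∑ k, Q j k * log (Q j k / P j k) = -log s := by
    have hterm : ∀ j k, Q j k * log (Q j k / P j k) = -(Q j k * log s) := fun j k => by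
      unfold Q; split_ifs
      · rw [div_div_cancel_left' (hP j k).ne', log_inv, mul_neg]
      · simp
    simp only [hterm, sum_neg_distrib, ← sum_mul, hQ1, one_mul]
  have hrow := neg_log_sum_le_sum_mul_log_div (s := A) (q := fun j => ∑ k, Q j k)
    (fun j => sum_nonneg fun k _ => hQ0 j k) hQ1 (fun j hj => by simp [Q, hj]) hrowP
  have hcol := neg_log_sum_le_sum_mul_log_div (s := B) (q := fun k => ∑ j, Q j k)
    (fun k => sum_nonneg fun j _ => hQ0 j k) (by rw [sum_comm, hQ1]) (fun k hk => by simp [Q, hk])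
    hcolP
  have hlog : log s ≤ lam0 * log a + lam1 * log b := by
    linarith [hsub Q hQ0 hQ1, mul_le_mul_of_nonneg_left hrow h0, mul_le_mul_of_nonneg_left hcol h1]
  rw [← log_le_log_iff hs (by positivity), log_mul (by positivity) (by positivity),
    log_rpow ha, log_rpow hb]
  exact hlog

theorem SubConjugate.sum_rect_mul_rpow_le_max {lam0 lam1 : ℝ} (hsub : SubConjugate P lam0 lam1)
    (hP : ∀ j k, 0 < P j k) (hl0 : lam0 ≤ 1) (hl1 : lam1 ≤ 1) (hls : 1 ≤ lam0 + lam1)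
    {n₀ n₁ : ℝ} (hn₀ : 0 ≤ n₀) (hn₁ : 0 ≤ n₁) (A : Finset α) (B : Finset β) :
    (∑ j ∈ A, ∑ k ∈ B, P j k) * (n₀ ^ lam0 * n₁ ^ lam1) ≤
      max (max (n₀ * ∑ j ∈ A, ∑ k, P j k) (n₁ * ∑ k ∈ B, ∑ j, P j k))
        ((n₀ * ∑ j ∈ A, ∑ k, P j k) * (n₁ * ∑ k ∈ B, ∑ j, P j k)) := by
  have ha : 0 ≤ ∑ j ∈ A, ∑ k, P j k := sum_nonneg fun j _ => sum_nonneg fun k _ => (hP j k).le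
  have hb : 0 ≤ ∑ k ∈ B, ∑ j, P j k := sum_nonneg fun k _ => sum_nonneg fun j _ => (hP j k).le
  calc (∑ j ∈ A, ∑ k ∈ B, P j k) * (n₀ ^ lam0 * n₁ ^ lam1)
      ≤ (∑ j ∈ A, ∑ k, P j k) ^ lam0 * (∑ k ∈ B, ∑ j, P j k) ^ lam1 * (n₀ ^ lam0 * n₁ ^ lam1) := by
        gcongr
        exact hsub.sum_rect_le_rpow hP (by linarith) (by linarith) A B
    _ = (n₀ * ∑ j ∈ A, ∑ k, P j k) ^ lam0 * (n₁ * ∑ k ∈ B, ∑ j, P j k) ^ lam1 := by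
        rw [mul_rpow hn₀ ha, mul_rpow hn₁ hb]; ring
    _ ≤ _ := rpow_mul_rpow_le_max (mul_nonneg hn₀ ha) (mul_nonneg hn₁ hb) hl0 hl1 hls

theorem sum_filter_exists_mem_le {ι : Type*} [Fintype ι] (hP : ∀ j k, 0 ≤ P j k)
    (B₀ : ι → Finset α) (B₁ : ι → Finset β)
    [DecidablePred fun jk : α × β => ∃ t, jk.1 ∈ B₀ t ∧ jk.2 ∈ B₁ t] :
    ∑ jk ∈ univ.filter (fun jk : α × β => ∃ t, jk.1 ∈ B₀ t ∧ jk.2 ∈ B₁ t), P jk.1 jk.2 ≤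
      ∑ t, ∑ j ∈ B₀ t, ∑ k ∈ B₁ t, P j k := by
  classical
  have hunion : univ.filter (fun jk : α × β => ∃ t, jk.1 ∈ B₀ t ∧ jk.2 ∈ B₁ t) =
      univ.biUnion fun t => B₀ t ×ˢ B₁ t := by
    ext; simp
  simp only [hunion, ← sum_product']
  exact sum_biUnion_le (fun jk : α × β => hP jk.1 jk.2) _ _

end

theorem bucketing_work_lower_bound_general (b₀ b₁ T : ℕ) (P : Fin b₀ → Fin b₁ → ℝ)
    (hPpos : ∀ j k, 0 < P j k)
    (lam0 lam1 : ℝ) (hl0 : lam0 ≤ 1) (hl1 : lam1 ≤ 1) (hls : 1 ≤ lam0 + lam1)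
    (hsub : SubConjugate P lam0 lam1)
    (B₀ : Fin T → Finset (Fin b₀)) (B₁ : Fin T → Finset (Fin b₁))
    (n₀ n₁ : ℝ) (hn₀ : 0 < n₀) (hn₁ : 0 < n₁)
    (S W : ℝ)
    (hS : S = ∑ jk ∈ Finset.univ.filter
        (fun jk : Fin b₀ × Fin b₁ => ∃ t, jk.1 ∈ B₀ t ∧ jk.2 ∈ B₁ t),
      P jk.1 jk.2)
    (hW : W = ∑ t, max (max (n₀ * ∑ j ∈ B₀ t, ∑ k, P j k)
        (n₁ * ∑ k ∈ B₁ t, ∑ j, P j k))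
      ((n₀ * ∑ j ∈ B₀ t, ∑ k, P j k) * (n₁ * ∑ k ∈ B₁ t, ∑ j, P j k))) :
    S * n₀ ^ lam0 * n₁ ^ lam1 ≤ W := by
  have hS_le := sum_filter_exists_mem_le (fun j k => (hPpos j k).le) B₀ B₁
  rw [← hS] at hS_le
  calc S * n₀ ^ lam0 * n₁ ^ lam1
      = S * (n₀ ^ lam0 * n₁ ^ lam1) := mul_assoc _ _ _
    _ ≤ (∑ t, ∑ j ∈ B₀ t, ∑ k ∈ B₁ t, P j k) * (n₀ ^ lam0 * n₁ ^ lam1) := by gcongr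
    _ = ∑ t, (∑ j ∈ B₀ t, ∑ k ∈ B₁ t, P j k) * (n₀ ^ lam0 * n₁ ^ lam1) := sum_mul _ _ _
    _ ≤ W := hW ▸ sum_le_sum fun t _ =>
        hsub.sum_rect_mul_rpow_le_max hPpos hl0 hl1 hls hn₀.le hn₁.le (B₀ t) (B₁ t)

/-- Lower bound on the work of any bucketing code: if `λ₀, λ₁ ≤ 1 ≤ λ₀+λ₁` are
`P`-sub-conjugate, then `W ≥ S n₀^{λ₀} n₁^{λ₁}`, where `S` is the success
probability and `W` the work of the code. -/
theorem bucketing_work_lower_bound (b₀ b₁ T : ℕ) (P : Fin b₀ → Fin b₁ → ℝ)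
    (hPpos : ∀ j k, 0 < P j k) (hPsum : ∑ j, ∑ k, P j k = 1)
    (lam0 lam1 : ℝ) (hl0 : lam0 ≤ 1) (hl1 : lam1 ≤ 1) (hls : 1 ≤ lam0 + lam1)
    (hsub : SubConjugate P lam0 lam1)
    (B₀ : Fin T → Finset (Fin b₀)) (B₁ : Fin T → Finset (Fin b₁))
    (n₀ n₁ : ℝ) (hn₀ : 0 < n₀) (hn₁ : 0 < n₁)
    (S W : ℝ)
    (hS : S = ∑ jk ∈ Finset.univ.filter
        (fun jk : Fin b₀ × Fin b₁ => ∃ t, jk.1 ∈ B₀ t ∧ jk.2 ∈ B₁ t),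
      P jk.1 jk.2)
    (hW : W = ∑ t, max (max (n₀ * ∑ j ∈ B₀ t, ∑ k, P j k)
        (n₁ * ∑ k ∈ B₁ t, ∑ j, P j k))
      ((n₀ * ∑ j ∈ B₀ t, ∑ k, P j k) * (n₁ * ∑ k ∈ B₁ t, ∑ j, P j k))) :
    S * n₀ ^ lam0 * n₁ ^ lam1 ≤ W :=
  bucketing_work_lower_bound_general b₀ b₁ T P hPpos lam0 lam1 hl0 hl1 hls hsub B₀ B₁ n₀ n₁ hn₀ hn₁
    S W hS hW
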